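/- In the permutation wreath product W = Sym(A) ⋉ B with length function ℓ̂_K^A, the subadditivity inequality ℓ̂_K^A((α₁α₂, b₁^{α₂}b₂)) ≤ ℓ̂_K^A((α₁,b₁)) + ℓ̂_K^A((α₂,b₂)) holds for all α₁, α₂ ∈ Sym(A) and b₁, b₂ ∈ B. -/

import Mathlib

/-! The inequality holds summand by summand. At a point `a` fixed by `α₂` we have
`(α₁ * α₂) a = α₁ a` and `b₁ (α₂⁻¹ a) = b₁ a`, so it is subadditivity of `ℓ_K` (or `1 ≤ 1 + ℓ_K`);
at a point moved by `α₂` the right-hand side is already at least `1 ≥` the left-hand side. -/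

/-- An invariant length function on a group, valued in `[0,1]`. -/
def IsInvLength {K : Type*} [Group K] (ℓ : K → ℝ) : Prop :=
  (∀ x, 0 ≤ ℓ x) ∧ (∀ x, ℓ x ≤ 1) ∧ (∀ x, ℓ x = 0 ↔ x = 1) ∧
  (∀ x, ℓ x⁻¹ = ℓ x) ∧ (∀ x y, ℓ (x * y) ≤ ℓ x + ℓ y) ∧
  (∀ x y, ℓ (x * y * x⁻¹) = ℓ y)

/-- The length `ℓ̂_K^A (α, b)` for the permutation wreath product. -/
noncomputable def permWrLen {K A : Type*} [Group K] [Fintype A] [DecidableEq A]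
    (ℓK : K → ℝ) (α : Equiv.Perm A) (b : A → K) : ℝ :=
  (1 / (Fintype.card A : ℝ)) * ∑ a : A, if α a = a then ℓK (b a) else 1

theorem IsInvLength.nonneg {K : Type*} [Group K] {ℓ : K → ℝ} (h : IsInvLength ℓ) (x : K) :
    0 ≤ ℓ x :=
  h.1 x

theorem IsInvLength.le_one {K : Type*} [Group K] {ℓ : K → ℝ} (h : IsInvLength ℓ) (x : K) :
    ℓ x ≤ 1 :=
  h.2.1 x

theorem IsInvLength.mul_le {K : Type*} [Group K] {ℓ : K → ℝ} (h : IsInvLength ℓ) (x y : K) :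
    ℓ (x * y) ≤ ℓ x + ℓ y :=
  h.2.2.2.2.1 x y

section

variable {K A : Type*} [Group K] [DecidableEq A] {ℓ : K → ℝ}

theorem fixedPointLen_mul_le (h0 : ∀ x, 0 ≤ ℓ x) (h1 : ∀ x, ℓ x ≤ 1)
    (hsub : ∀ x y, ℓ (x * y) ≤ ℓ x + ℓ y) (α₁ α₂ : Equiv.Perm A) (b₁ b₂ : A → K) (a : A) :
    (if (α₁ * α₂) a = a then ℓ (b₁ (α₂⁻¹ a) * b₂ a) else 1) ≤
      (if α₁ a = a then ℓ (b₁ a) else 1) + (if α₂ a = a then ℓ (b₂ a) else 1) := by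
  have hle_one : (if (α₁ * α₂) a = a then ℓ (b₁ (α₂⁻¹ a) * b₂ a) else 1) ≤ 1 := by
    split_ifs
    exacts [h1 _, le_rfl]
  have hnonneg : 0 ≤ if α₁ a = a then ℓ (b₁ a) else 1 := by
    split_ifs
    exacts [h0 _, zero_le_one]
  by_cases h₂ : α₂ a = a
  · have h₂_inv : α₂⁻¹ a = a := Equiv.Perm.inv_eq_iff_eq.mpr h₂.symm
    rw [Equiv.Perm.mul_apply, h₂, h₂_inv, if_pos rfl]
    by_cases h₁ : α₁ a = a
    · simp only [if_pos h₁]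
      exact hsub _ _
    · simp only [if_neg h₁]
      linarith [h0 (b₂ a)]
  · rw [if_neg h₂]
    linarith

theorem permWrLen_mul_le [Fintype A] (h0 : ∀ x, 0 ≤ ℓ x) (h1 : ∀ x, ℓ x ≤ 1)
    (hsub : ∀ x y, ℓ (x * y) ≤ ℓ x + ℓ y) (α₁ α₂ : Equiv.Perm A) (b₁ b₂ : A → K) :
    permWrLen ℓ (α₁ * α₂) ((fun a => b₁ (α₂⁻¹ a)) * b₂) ≤
      permWrLen ℓ α₁ b₁ + permWrLen ℓ α₂ b₂ := by
  unfold permWrLen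
  rw [← mul_add, ← Finset.sum_add_distrib]
  gcongr with a
  exact fixedPointLen_mul_le h0 h1 hsub α₁ α₂ b₁ b₂ a

end

theorem stmt_9_general {K A : Type*} [Group K] [Fintype A] [DecidableEq A]
    (ℓK : K → ℝ) (hK : IsInvLength ℓK)
    (α₁ α₂ : Equiv.Perm A) (b₁ b₂ : A → K) :
    permWrLen ℓK (α₁ * α₂) ((fun a => b₁ (α₂⁻¹ a)) * b₂) ≤
      permWrLen ℓK α₁ b₁ + permWrLen ℓK α₂ b₂ :=
  permWrLen_mul_le hK.nonneg hK.le_one hK.mul_le α₁ α₂ b₁ b₂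

theorem stmt_9 {K A : Type*} [Group K] [Fintype A] [DecidableEq A] [Nonempty A]
    (ℓK : K → ℝ) (hK : IsInvLength ℓK)
    (α₁ α₂ : Equiv.Perm A) (b₁ b₂ : A → K) :
    permWrLen ℓK (α₁ * α₂) ((fun a => b₁ (α₂⁻¹ a)) * b₂) ≤
      permWrLen ℓK α₁ b₁ + permWrLen ℓK α₂ b₂ :=
  stmt_9_general ℓK hK α₁ α₂ b₁ b₂
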